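/- Let E be a real normed vector space and let f, g : E → ℝ be convex continuous functions admitting a common continuous affine minorant (there exist φ₀ ∈ E* and c ∈ ℝ with φ₀(u) − c ≤ f(u) and φ₀(u) − c ≤ g(u) for all u ∈ E). Then for every x ∈ E, (f ! g)(x) ≤ L(f,g)(x) ≤ (f ∇ g)(x), where f ! g = f !_{1/2} g, (f ∇ g)(x) = (f(x)+g(x))/2, and L(f,g)(x) = ∫₀¹ (f ♯_t g)(x) dt is the logarithmic mean of f and g. -/

import Mathlib

/-!
Fix `x`. Each pair of affine minorants `φ - c₁ ≤ f`, `φ - c₂ ≤ g` bounds `t ↦ (f !_t g)(x)` below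
by the affine function `φ(x) - (1 - t) c₁ - t c₂`, and evaluating these minorants at `x` gives
`(f !_t g)(x) ≤ (1 - t) f(x) + t g(x)`; as a supremum of affine functions, `t ↦ (f !_t g)(x)` is
also convex, hence continuous on `(0, 1)`. Now `(f ♯_λ g)(x)` is the average of `t ↦ (f !_t g)(x)`
against the Beta`(λ, 1 - λ)` distribution, which has mean `λ` and so maps `(1 - t) p + t q` to
`(1 - λ) p + λ q`: the same affine bounds hold for `λ ↦ (f ♯_λ g)(x)`. Integrating over
`λ ∈ (0, 1)` evaluates them at `λ = 1/2`; the upper bound becomes `(f ∇ g)(x)`, and the supremum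
of the lower bounds is `(f ! g)(x)`.
-/

open Real

/-- The `t`-weighted functional harmonic mean of `f,g : E → ℝ`, evaluated at `x`. -/
noncomputable def funHarm {E : Type*} [NormedAddCommGroup E] [NormedSpace ℝ E]
    (f g : E → ℝ) (t : ℝ) (x : E) : ℝ :=
  sSup { r : ℝ | ∃ φ : E →L[ℝ] ℝ, ∃ c₁ c₂ : ℝ,
    (∀ u : E, φ u - f u ≤ c₁) ∧ (∀ u : E, φ u - g u ≤ c₂) ∧
    r = φ x - (1 - t) * c₁ - t * c₂ }

/-- The `λ`-weighted functional geometric mean of `f,g : E → ℝ`, evaluated at `x`. -/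
noncomputable def funGeom {E : Type*} [NormedAddCommGroup E] [NormedSpace ℝ E]
    (f g : E → ℝ) (l : ℝ) (x : E) : ℝ :=
  (Real.sin (π * l) / π) *
    ∫ t in (0 : ℝ)..1, t ^ (l - 1) * (1 - t) ^ (-l) * funHarm f g t x

/-- The logarithmic mean `L(f,g)(x) = ∫₀¹ (f ♯_t g)(x) dt`. -/
noncomputable def funLog {E : Type*} [NormedAddCommGroup E] [NormedSpace ℝ E]
    (f g : E → ℝ) (x : E) : ℝ :=
  ∫ t in (0 : ℝ)..1, funGeom f g t x

open MeasureTheory Set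

lemma abs_one_sub_mul_add_mul_le {t : ℝ} (ht : t ∈ Icc (0 : ℝ) 1) (p q : ℝ) :
    |(1 - t) * p + t * q| ≤ |p| + |q| := by
  calc |(1 - t) * p + t * q| ≤ (1 - t) * |p| + t * |q| := by
        refine (abs_add_le _ _).trans ?_
        rw [abs_mul, abs_mul, abs_of_nonneg (sub_nonneg.2 ht.2), abs_of_nonneg ht.1]
    _ ≤ |p| + |q| := by nlinarith [ht.1, ht.2, abs_nonneg p, abs_nonneg q]

lemma abs_le_of_le_of_le_one_sub_mul_add_mul {t a y p q : ℝ} (ht : t ∈ Icc (0 : ℝ) 1)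
    (hay : a ≤ y) (hy : y ≤ (1 - t) * p + t * q) : |y| ≤ |a| + (|p| + |q|) :=
  (abs_le_max_abs_abs hay hy).trans <| max_le (le_add_of_nonneg_right (by positivity))
    ((abs_one_sub_mul_add_mul_le ht p q).trans (le_add_of_nonneg_left (abs_nonneg a)))

lemma integral_one_sub_mul_add_mul (p q : ℝ) :
    ∫ l in (0 : ℝ)..1, ((1 - l) * p + l * q) = (p + q) / 2 := by
  have hp : IntervalIntegrable (fun l : ℝ => (1 - l) * p) volume 0 1 :=
    (by fun_prop : Continuous fun l : ℝ => (1 - l) * p).intervalIntegrable 0 1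
  have hq : IntervalIntegrable (fun l : ℝ => l * q) volume 0 1 :=
    (by fun_prop : Continuous fun l : ℝ => l * q).intervalIntegrable 0 1
  rw [intervalIntegral.integral_add hp hq, intervalIntegral.integral_mul_const,
    intervalIntegral.integral_mul_const,
    intervalIntegral.integral_sub intervalIntegrable_const intervalIntegral.intervalIntegrable_id]
  norm_num
  ring

section BetaIntegral

variable {p q : ℝ}

lemma ofReal_rpow_mul_one_sub_rpow {t : ℝ} (ht : t ∈ Icc (0 : ℝ) 1) :
    ((t ^ (p - 1) * (1 - t) ^ (q - 1) : ℝ) : ℂ) =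
      (t : ℂ) ^ ((p : ℂ) - 1) * (1 - (t : ℂ)) ^ ((q : ℂ) - 1) := by
  push_cast
  rw [Complex.ofReal_cpow ht.1, Complex.ofReal_cpow (sub_nonneg.2 ht.2)]
  push_cast
  ring_nf

lemma intervalIntegrable_rpow_mul_one_sub_rpow (hp : 0 < p) (hq : 0 < q) :
    IntervalIntegrable (fun t : ℝ => t ^ (p - 1) * (1 - t) ^ (q - 1)) volume 0 1 := by
  have hC : IntervalIntegrable (fun t : ℝ => ((t ^ (p - 1) * (1 - t) ^ (q - 1) : ℝ) : ℂ))
      volume 0 1 :=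
    (Complex.betaIntegral_convergent (u := p) (v := q) (by simpa) (by simpa)).congr
      fun t ht => (ofReal_rpow_mul_one_sub_rpow (Ioc_subset_Icc_self
        (by rwa [uIoc_of_le zero_le_one] at ht))).symm
  rw [intervalIntegrable_iff] at hC ⊢
  exact hC.re

lemma integral_rpow_mul_one_sub_rpow (hp : 0 < p) (hq : 0 < q) :
    ∫ t in (0 : ℝ)..1, t ^ (p - 1) * (1 - t) ^ (q - 1)
      = Real.Gamma p * Real.Gamma q / Real.Gamma (p + q) := by
  have hB : Complex.betaIntegral p q =
      ((∫ t in (0 : ℝ)..1, t ^ (p - 1) * (1 - t) ^ (q - 1) : ℝ) : ℂ) := by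
    rw [Complex.betaIntegral, ← intervalIntegral.integral_ofReal]
    exact intervalIntegral.integral_congr fun t ht =>
      (ofReal_rpow_mul_one_sub_rpow (by rwa [uIcc_of_le zero_le_one] at ht)).symm
  have h := Complex.Gamma_mul_Gamma_eq_betaIntegral (s := p) (t := q) (by simpa) (by simpa)
  rw [hB, ← Complex.ofReal_add] at h
  simp only [Complex.Gamma_ofReal] at h
  rw [eq_div_iff (Real.Gamma_pos_of_pos (add_pos hp hq)).ne']
  exact_mod_cast (h.trans (mul_comm _ _)).symm

end BetaIntegral

section BetaAverage

variable {l : ℝ}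

lemma sin_pi_mul_pos (hl : l ∈ Ioo (0 : ℝ) 1) : 0 < Real.sin (π * l) :=
  sin_pos_of_pos_of_lt_pi (mul_pos pi_pos hl.1) (by nlinarith [pi_pos, hl.2])

/-- The mean of `h` under the Beta`(l, 1 - l)` distribution on `(0, 1)`: by Euler's reflection
formula, `sin (π l) / π = 1 / (Γ(l) Γ(1 - l))` is its normalising constant. -/
noncomputable def betaAverage (l : ℝ) (h : ℝ → ℝ) : ℝ :=
  Real.sin (π * l) / π * ∫ t in (0 : ℝ)..1, t ^ (l - 1) * (1 - t) ^ (-l) * h t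

lemma intervalIntegrable_betaKernel (hl : l ∈ Ioo (0 : ℝ) 1) :
    IntervalIntegrable (fun t : ℝ => t ^ (l - 1) * (1 - t) ^ (-l)) volume 0 1 := by
  simpa using intervalIntegrable_rpow_mul_one_sub_rpow hl.1 (sub_pos.2 hl.2)

lemma intervalIntegrable_betaKernel_mul (hl : l ∈ Ioo (0 : ℝ) 1) {h : ℝ → ℝ} {M : ℝ}
    (hh : ContinuousOn h (Ioo 0 1)) (hM : ∀ t ∈ Ioo (0 : ℝ) 1, |h t| ≤ M) :
    IntervalIntegrable (fun t : ℝ => t ^ (l - 1) * (1 - t) ^ (-l) * h t) volume 0 1 := by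
  rw [intervalIntegrable_iff_integrableOn_Ioo_of_le zero_le_one]
  have hw := (intervalIntegrable_betaKernel hl).mul_const M
  rw [intervalIntegrable_iff_integrableOn_Ioo_of_le zero_le_one] at hw
  refine hw.mono' (((by fun_prop : Measurable fun t : ℝ => t ^ (l - 1) * (1 - t) ^ (-l))
    |>.aestronglyMeasurable).mul (hh.aestronglyMeasurable measurableSet_Ioo)) ?_
  filter_upwards [ae_restrict_mem measurableSet_Ioo] with t ht
  have hw0 : 0 ≤ t ^ (l - 1) * (1 - t) ^ (-l) :=
    mul_nonneg (rpow_nonneg ht.1.le _) (rpow_nonneg (sub_nonneg.2 ht.2.le) _)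
  rw [norm_mul, Real.norm_of_nonneg hw0, Real.norm_eq_abs]
  exact mul_le_mul_of_nonneg_left (hM t ht) hw0

lemma intervalIntegrable_betaKernel_mul_one_sub_mul_add_mul (hl : l ∈ Ioo (0 : ℝ) 1)
    (p q : ℝ) :
    IntervalIntegrable (fun t : ℝ => t ^ (l - 1) * (1 - t) ^ (-l) * ((1 - t) * p + t * q))
      volume 0 1 :=
  intervalIntegrable_betaKernel_mul hl (by fun_prop)
    fun t ht => abs_one_sub_mul_add_mul_le (Ioo_subset_Icc_self ht) p q

lemma betaAverage_one_sub_mul_add_mul (hl : l ∈ Ioo (0 : ℝ) 1) (p q : ℝ) :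
    betaAverage l (fun t => (1 - t) * p + t * q) = (1 - l) * p + l * q := by
  have hl₀ : 0 < l := hl.1
  have hl₁ : 0 < 1 - l := sub_pos.2 hl.2
  have hsplit : ∀ t ∈ uIcc (0 : ℝ) 1, t ^ (l - 1) * (1 - t) ^ (-l) * ((1 - t) * p + t * q)
      = p * (t ^ (l - 1) * (1 - t) ^ ((2 - l) - 1))
        + q * (t ^ ((l + 1) - 1) * (1 - t) ^ ((1 - l) - 1)) := by
    intro t ht
    rw [uIcc_of_le zero_le_one] at ht
    rw [show (2 - l) - 1 = -l + 1 by ring, show (l + 1) - 1 = (l - 1) + 1 by ring,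
      show (1 - l) - 1 = -l by ring, rpow_add_one' (sub_nonneg.2 ht.2) (by linarith),
      rpow_add_one' ht.1 (by linarith)]
    ring
  have hB₁ : ∫ t in (0 : ℝ)..1, t ^ (l - 1) * (1 - t) ^ ((2 - l) - 1)
      = (1 - l) * (Real.Gamma l * Real.Gamma (1 - l)) := by
    rw [integral_rpow_mul_one_sub_rpow hl₀ (by linarith), show l + (2 - l) = 2 by ring,
      Real.Gamma_two, show 2 - l = (1 - l) + 1 by ring, Real.Gamma_add_one hl₁.ne']
    ring
  have hB₂ : ∫ t in (0 : ℝ)..1, t ^ ((l + 1) - 1) * (1 - t) ^ ((1 - l) - 1)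
      = l * (Real.Gamma l * Real.Gamma (1 - l)) := by
    rw [integral_rpow_mul_one_sub_rpow (by linarith) hl₁, show l + 1 + (1 - l) = 2 by ring,
      Real.Gamma_two, Real.Gamma_add_one hl₀.ne']
    ring
  rw [betaAverage, intervalIntegral.integral_congr hsplit, intervalIntegral.integral_add
      ((intervalIntegrable_rpow_mul_one_sub_rpow hl₀ (by linarith)).const_mul p)
      ((intervalIntegrable_rpow_mul_one_sub_rpow (by linarith) hl₁).const_mul q),
    intervalIntegral.integral_const_mul, intervalIntegral.integral_const_mul, hB₁, hB₂,
    Real.Gamma_mul_Gamma_one_sub]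
  have hsin := sin_pi_mul_pos hl
  field_simp

lemma betaAverage_mono (hl : l ∈ Ioo (0 : ℝ) 1) {h₁ h₂ : ℝ → ℝ}
    (hi₁ : IntervalIntegrable (fun t : ℝ => t ^ (l - 1) * (1 - t) ^ (-l) * h₁ t) volume 0 1)
    (hi₂ : IntervalIntegrable (fun t : ℝ => t ^ (l - 1) * (1 - t) ^ (-l) * h₂ t) volume 0 1)
    (hle : ∀ t ∈ Ioo (0 : ℝ) 1, h₁ t ≤ h₂ t) :
    betaAverage l h₁ ≤ betaAverage l h₂ := by
  have hsin := sin_pi_mul_pos hl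
  refine mul_le_mul_of_nonneg_left (intervalIntegral.integral_mono_on_of_le_Ioo zero_le_one
    hi₁ hi₂ fun t ht => mul_le_mul_of_nonneg_left (hle t ht) ?_) (by positivity)
  exact mul_nonneg (rpow_nonneg ht.1.le _) (rpow_nonneg (sub_nonneg.2 ht.2.le) _)

end BetaAverage

section HarmonicMean

variable {E : Type*} [NormedAddCommGroup E] [NormedSpace ℝ E] {f g : E → ℝ} {x : E} {t : ℝ}
  {φ₀ : E →L[ℝ] ℝ} {c : ℝ}

lemma le_funHarm {φ : E →L[ℝ] ℝ} {c₁ c₂ : ℝ} (h₁ : ∀ u, φ u - f u ≤ c₁)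
    (h₂ : ∀ u, φ u - g u ≤ c₂) (ht : t ∈ Icc (0 : ℝ) 1) :
    φ x - (1 - t) * c₁ - t * c₂ ≤ funHarm f g t x := by
  refine le_csSup ⟨(1 - t) * f x + t * g x, ?_⟩ ⟨φ, c₁, c₂, h₁, h₂, rfl⟩
  rintro _ ⟨ψ, d₁, d₂, hd₁, hd₂, rfl⟩
  nlinarith [hd₁ x, hd₂ x, ht.1, ht.2]

lemma funHarm_le (hm : ∀ u, φ₀ u - c ≤ f u ∧ φ₀ u - c ≤ g u) {b : ℝ}
    (hb : ∀ (φ : E →L[ℝ] ℝ) (c₁ c₂ : ℝ), (∀ u, φ u - f u ≤ c₁) → (∀ u, φ u - g u ≤ c₂) →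
      φ x - (1 - t) * c₁ - t * c₂ ≤ b) :
    funHarm f g t x ≤ b := by
  refine csSup_le ⟨_, φ₀, c, c, fun u => ?_, fun u => ?_, rfl⟩ ?_
  · linarith [(hm u).1]
  · linarith [(hm u).2]
  · rintro _ ⟨φ, c₁, c₂, h₁, h₂, rfl⟩
    exact hb φ c₁ c₂ h₁ h₂

lemma funHarm_le_one_sub_mul_add_mul (hm : ∀ u, φ₀ u - c ≤ f u ∧ φ₀ u - c ≤ g u)
    (ht : t ∈ Icc (0 : ℝ) 1) :
    funHarm f g t x ≤ (1 - t) * f x + t * g x :=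
  funHarm_le hm fun _ _ _ h₁ h₂ => by nlinarith [h₁ x, h₂ x, ht.1, ht.2]

lemma sub_le_funHarm (hm : ∀ u, φ₀ u - c ≤ f u ∧ φ₀ u - c ≤ g u) (ht : t ∈ Icc (0 : ℝ) 1) :
    φ₀ x - c ≤ funHarm f g t x := by
  have h := le_funHarm (x := x) (fun u => by linarith [(hm u).1] : ∀ u, φ₀ u - f u ≤ c)
    (fun u => by linarith [(hm u).2] : ∀ u, φ₀ u - g u ≤ c) ht
  linarith

lemma convexOn_funHarm (hm : ∀ u, φ₀ u - c ≤ f u ∧ φ₀ u - c ≤ g u) :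
    ConvexOn ℝ (Icc 0 1) (fun t => funHarm f g t x) := by
  refine ⟨convex_Icc 0 1, fun t₁ ht₁ t₂ ht₂ a b ha hb hab => funHarm_le hm ?_⟩
  intro φ c₁ c₂ h₁ h₂
  have e₁ := le_funHarm (x := x) h₁ h₂ ht₁
  have e₂ := le_funHarm (x := x) h₁ h₂ ht₂
  calc φ x - (1 - (a • t₁ + b • t₂)) * c₁ - (a • t₁ + b • t₂) * c₂
      = a * (φ x - (1 - t₁) * c₁ - t₁ * c₂) + b * (φ x - (1 - t₂) * c₁ - t₂ * c₂) := by
        simp only [smul_eq_mul]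
        linear_combination (c₁ - φ x) * hab
    _ ≤ a • funHarm f g t₁ x + b • funHarm f g t₂ x := by
        simp only [smul_eq_mul]
        gcongr

lemma continuousOn_funHarm (hm : ∀ u, φ₀ u - c ≤ f u ∧ φ₀ u - c ≤ g u) :
    ContinuousOn (fun t => funHarm f g t x) (Ioo 0 1) :=
  ((convexOn_funHarm hm).subset Ioo_subset_Icc_self (convex_Ioo 0 1)).continuousOn isOpen_Ioo

lemma abs_funHarm_le (hm : ∀ u, φ₀ u - c ≤ f u ∧ φ₀ u - c ≤ g u) (ht : t ∈ Icc (0 : ℝ) 1) :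
    |funHarm f g t x| ≤ |φ₀ x - c| + (|f x| + |g x|) :=
  abs_le_of_le_of_le_one_sub_mul_add_mul ht (sub_le_funHarm hm ht)
    (funHarm_le_one_sub_mul_add_mul hm ht)

lemma intervalIntegrable_betaKernel_mul_funHarm (hm : ∀ u, φ₀ u - c ≤ f u ∧ φ₀ u - c ≤ g u)
    {l : ℝ} (hl : l ∈ Ioo (0 : ℝ) 1) :
    IntervalIntegrable (fun t : ℝ => t ^ (l - 1) * (1 - t) ^ (-l) * funHarm f g t x)
      volume 0 1 :=
  intervalIntegrable_betaKernel_mul hl (continuousOn_funHarm hm)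
    fun _ ht => abs_funHarm_le hm (Ioo_subset_Icc_self ht)

end HarmonicMean

section GeometricMean

variable {E : Type*} [NormedAddCommGroup E] [NormedSpace ℝ E] {f g : E → ℝ} {x : E} {l : ℝ}
  {φ₀ : E →L[ℝ] ℝ} {c : ℝ}

lemma funGeom_eq_betaAverage : funGeom f g l x = betaAverage l (fun t => funHarm f g t x) := rfl

lemma le_funGeom (hm : ∀ u, φ₀ u - c ≤ f u ∧ φ₀ u - c ≤ g u) {φ : E →L[ℝ] ℝ} {c₁ c₂ : ℝ}
    (h₁ : ∀ u, φ u - f u ≤ c₁) (h₂ : ∀ u, φ u - g u ≤ c₂) (hl : l ∈ Ioo (0 : ℝ) 1) :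
    (1 - l) * (φ x - c₁) + l * (φ x - c₂) ≤ funGeom f g l x := by
  rw [← betaAverage_one_sub_mul_add_mul hl, funGeom_eq_betaAverage]
  refine betaAverage_mono hl (intervalIntegrable_betaKernel_mul_one_sub_mul_add_mul hl _ _)
    (intervalIntegrable_betaKernel_mul_funHarm hm hl) fun t ht => ?_
  linarith [le_funHarm (x := x) h₁ h₂ (Ioo_subset_Icc_self ht)]

lemma funGeom_le_one_sub_mul_add_mul (hm : ∀ u, φ₀ u - c ≤ f u ∧ φ₀ u - c ≤ g u)
    (hl : l ∈ Ioo (0 : ℝ) 1) :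
    funGeom f g l x ≤ (1 - l) * f x + l * g x := by
  rw [← betaAverage_one_sub_mul_add_mul hl, funGeom_eq_betaAverage]
  exact betaAverage_mono hl (intervalIntegrable_betaKernel_mul_funHarm hm hl)
    (intervalIntegrable_betaKernel_mul_one_sub_mul_add_mul hl _ _)
    fun t ht => funHarm_le_one_sub_mul_add_mul hm (Ioo_subset_Icc_self ht)

lemma abs_funGeom_le (hm : ∀ u, φ₀ u - c ≤ f u ∧ φ₀ u - c ≤ g u) (hl : l ∈ Ioo (0 : ℝ) 1) :
    |funGeom f g l x| ≤ |φ₀ x - c| + (|f x| + |g x|) := by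
  have h := le_funGeom (x := x) hm (fun u => by linarith [(hm u).1] : ∀ u, φ₀ u - f u ≤ c)
    (fun u => by linarith [(hm u).2] : ∀ u, φ₀ u - g u ≤ c) hl
  exact abs_le_of_le_of_le_one_sub_mul_add_mul (Ioo_subset_Icc_self hl) (by linarith)
    (funGeom_le_one_sub_mul_add_mul hm hl)

lemma aestronglyMeasurable_funGeom (hm : ∀ u, φ₀ u - c ≤ f u ∧ φ₀ u - c ≤ g u) :
    AEStronglyMeasurable (fun l => funGeom f g l x) (volume.restrict (Ioo 0 1)) := by
  have hH : AEStronglyMeasurable (fun t => funHarm f g t x) (volume.restrict (Ioc 0 1)) := by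
    rw [← Measure.restrict_congr_set Ioo_ae_eq_Ioc]
    exact (continuousOn_funHarm hm).aestronglyMeasurable measurableSet_Ioo
  have hF : AEStronglyMeasurable
      (fun p : ℝ × ℝ => p.2 ^ (p.1 - 1) * (1 - p.2) ^ (-p.1) * funHarm f g p.2 x)
      ((volume.restrict (Ioo 0 1)).prod (volume.restrict (Ioc 0 1))) :=
    (by fun_prop : Measurable fun p : ℝ × ℝ => p.2 ^ (p.1 - 1) * (1 - p.2) ^ (-p.1))
      |>.aestronglyMeasurable.mul hH.comp_snd
  simp_rw [funGeom, intervalIntegral.integral_of_le zero_le_one]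
  exact (by fun_prop : Continuous fun l : ℝ => Real.sin (π * l) / π).aestronglyMeasurable.mul
    hF.integral_prod_right'

lemma intervalIntegrable_funGeom (hm : ∀ u, φ₀ u - c ≤ f u ∧ φ₀ u - c ≤ g u) :
    IntervalIntegrable (fun l => funGeom f g l x) volume 0 1 := by
  rw [intervalIntegrable_iff_integrableOn_Ioo_of_le zero_le_one]
  refine (integrableOn_const (C := |φ₀ x - c| + (|f x| + |g x|)) measure_Ioo_lt_top.ne).mono'
    (aestronglyMeasurable_funGeom hm) ?_
  filter_upwards [ae_restrict_mem measurableSet_Ioo] with l hl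
  exact abs_funGeom_le hm hl

end GeometricMean

theorem funHarm_le_funLog_le_arith_general
    {E : Type*} [NormedAddCommGroup E] [NormedSpace ℝ E]
    (f g : E → ℝ)
    (hmin : ∃ φ₀ : E →L[ℝ] ℝ, ∃ c : ℝ, ∀ u : E, φ₀ u - c ≤ f u ∧ φ₀ u - c ≤ g u) :
    ∀ x : E, funHarm f g (1 / 2) x ≤ funLog f g x ∧ funLog f g x ≤ (f x + g x) / 2 := by
  intro x
  obtain ⟨φ₀, c, hm⟩ := hmin
  have hG := intervalIntegrable_funGeom (x := x) hm
  have hAff (p q : ℝ) : IntervalIntegrable (fun l : ℝ => (1 - l) * p + l * q) volume 0 1 :=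
    (by fun_prop : Continuous fun l : ℝ => (1 - l) * p + l * q).intervalIntegrable 0 1
  constructor
  · refine funHarm_le hm fun φ c₁ c₂ h₁ h₂ => ?_
    calc φ x - (1 - 1 / 2) * c₁ - 1 / 2 * c₂
        = ∫ l in (0 : ℝ)..1, ((1 - l) * (φ x - c₁) + l * (φ x - c₂)) := by
          rw [integral_one_sub_mul_add_mul]; ring
      _ ≤ funLog f g x := intervalIntegral.integral_mono_on_of_le_Ioo zero_le_one (hAff _ _) hG
          fun l hl => le_funGeom hm h₁ h₂ hl
  · calc funLog f g x ≤ ∫ l in (0 : ℝ)..1, ((1 - l) * f x + l * g x) :=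
          intervalIntegral.integral_mono_on_of_le_Ioo zero_le_one hG (hAff _ _)
            fun l hl => funGeom_le_one_sub_mul_add_mul hm hl
      _ = (f x + g x) / 2 := integral_one_sub_mul_add_mul _ _

/-- The harmonic–logarithmic–arithmetic mean inequalities for convex
functionals: `(f ! g)(x) ≤ L(f,g)(x) ≤ (f ∇ g)(x)`. -/
theorem funHarm_le_funLog_le_arith
    {E : Type*} [NormedAddCommGroup E] [NormedSpace ℝ E]
    (f g : E → ℝ)
    (hf : ConvexOn ℝ Set.univ f) (hfc : Continuous f)
    (hg : ConvexOn ℝ Set.univ g) (hgc : Continuous g)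
    (hmin : ∃ φ₀ : E →L[ℝ] ℝ, ∃ c : ℝ, ∀ u : E, φ₀ u - c ≤ f u ∧ φ₀ u - c ≤ g u) :
    ∀ x : E, funHarm f g (1 / 2) x ≤ funLog f g x ∧ funLog f g x ≤ (f x + g x) / 2 :=
  funHarm_le_funLog_le_arith_general f g hmin
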